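/- arXiv:2404.11693 — 2 statements merged into one kernel-verified Lean document; each statement's English description precedes it below -/
import Mathlib

section
/- Assume (φ1)–(φ3) and (V1)–(V5). If q₁ and q₂ are twice differentiable classical solutions with continuous derivative of −(φ(|u'|)u')' + V'(u) = 0 on ℝ satisfying qᵢ(t) → α as t → +∞ and qᵢ(t) → −α as t → −∞ for i = 1,2, then there exists τ ∈ ℝ such that q₂(t) = q₁(t + τ) for all t ∈ ℝ. -/
/-!
Differentiating `q' Φ'(q') - Φ(q') - V(q)` along a solution gives zero, and its limit along a
sequence where `q' → 0` is `-V(α) = 0`; so the kinetic energy `p Φ'(p) - Φ(p)` of `q'` equals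
`V(q)`. Near `α` the growth conditions (φ2), (φ3), (V3) turn this identity into
`|q'| ≤ K (α - q)`, so by Gronwall `q` cannot reach `α` in finite time; reflecting `t ↦ -q(-t)`,
it stays above `-α` as well. Then `V(q) > 0` forces `q' ≠ 0`, hence `q' > 0`, and since the
kinetic energy is strictly increasing on `[0, ∞)`, `q₂'(t) = q₁'(s)` whenever `q₂(t) = q₁(s)`.
Consequently `t ↦ q₁⁻¹(q₂ t) - t` has zero derivative.
-/

open Real Filter Set MeasureTheory

noncomputable def Phi (φ : ℝ → ℝ) (t : ℝ) : ℝ := ∫ s in (0:ℝ)..|t|, s * φ s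

def IsClassicalSolution (φ V q : ℝ → ℝ) : Prop :=
  Differentiable ℝ q ∧
  ∀ t : ℝ, HasDerivAt
    (fun s => if deriv q s = 0 then 0 else φ |deriv q s| * deriv q s)
    (deriv V (q t)) t

def IsHeteroclinic (φ V : ℝ → ℝ) (α : ℝ) (q : ℝ → ℝ) : Prop :=
  IsClassicalSolution φ V q ∧ Differentiable ℝ (deriv q) ∧ Continuous (deriv q) ∧
  q 0 = 0 ∧ Tendsto q atTop (nhds α) ∧ Tendsto q atBot (nhds (-α))

open scoped Topology

namespace PhiLaplacian

noncomputable def momentum (φ : ℝ → ℝ) (p : ℝ) : ℝ := φ |p| * p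

noncomputable def kineticEnergy (φ : ℝ → ℝ) (p : ℝ) : ℝ := p * momentum φ p - Phi φ p

variable {φ : ℝ → ℝ}

lemma momentum_of_nonneg {p : ℝ} (hp : 0 ≤ p) : momentum φ p = φ p * p := by
  rw [momentum, abs_of_nonneg hp]

lemma momentum_neg (p : ℝ) : momentum φ (-p) = -momentum φ p := by
  simp only [momentum, abs_neg, mul_neg]

lemma Phi_zero : Phi φ 0 = 0 := by
  simp [Phi]

lemma Phi_neg (p : ℝ) : Phi φ (-p) = Phi φ p := by
  rw [Phi, Phi, abs_neg]

lemma Phi_abs (p : ℝ) : Phi φ |p| = Phi φ p := by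
  rw [Phi, Phi, abs_abs]

lemma Phi_eq_integral_momentum (p : ℝ) : Phi φ p = ∫ s in (0:ℝ)..p, momentum φ s := by
  have h_nonneg : ∀ b, 0 ≤ b → ∫ s in (0:ℝ)..b, s * φ s = ∫ s in (0:ℝ)..b, momentum φ s := by
    intro b hb
    refine intervalIntegral.integral_congr fun s hs => ?_
    rw [uIcc_of_le hb] at hs
    rw [momentum_of_nonneg hs.1, mul_comm]
  rcases le_total 0 p with hp | hp
  · rw [Phi, abs_of_nonneg hp, h_nonneg p hp]
  · rw [Phi, abs_of_nonpos hp, h_nonneg (-p) (neg_nonneg.mpr hp)]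
    have h := intervalIntegral.integral_comp_neg (a := 0) (b := -p) (momentum φ)
    rw [neg_neg, neg_zero, intervalIntegral.integral_symm 0 p] at h
    simpa only [momentum_neg, intervalIntegral.integral_neg, neg_inj] using h

lemma continuous_momentum (hφ : ContinuousOn φ (Ioi 0))
    (h0 : Tendsto (fun t => φ t * t) (𝓝[>] 0) (𝓝 0)) : Continuous (momentum φ) := by
  refine continuous_iff_continuousAt.mpr fun p => ?_
  rcases eq_or_ne p 0 with rfl | hp
  · refine continuousWithinAt_compl_self.mp ?_
    rw [ContinuousWithinAt, show momentum φ 0 = 0 by simp [momentum]]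
    refine tendsto_zero_iff_norm_tendsto_zero.mpr ?_
    have h := (h0.comp tendsto_abs_nhdsNE_zero).norm
    simpa [Function.comp_def, momentum, norm_mul] using h
  · have hφp : ContinuousAt φ |p| := hφ.continuousAt (Ioi_mem_nhds (abs_pos.mpr hp))
    exact (hφp.comp continuous_abs.continuousAt).mul continuousAt_id

lemma tendsto_mul_self_nhdsGT_zero {c₁ c₂ δ₀ r : ℝ} (hδ₀ : 0 < δ₀) (hr : 1 < r)
    (hb : ∀ t, 0 < t → t ≤ δ₀ → c₁ * t ^ (r - 1) ≤ φ t * t ∧ φ t * t ≤ c₂ * t ^ (r - 1)) :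
    Tendsto (fun t => φ t * t) (𝓝[>] 0) (𝓝 0) := by
  have hpow : ∀ c : ℝ, Tendsto (fun t : ℝ => c * t ^ (r - 1)) (𝓝[>] 0) (𝓝 0) := fun c => by
    have h := ((continuous_rpow_const (by linarith : 0 ≤ r - 1)).tendsto 0).const_mul c
    rw [zero_rpow (by linarith), mul_zero] at h
    exact h.mono_left nhdsWithin_le_nhds
  have hev : ∀ᶠ t in 𝓝[>] 0, c₁ * t ^ (r - 1) ≤ φ t * t ∧ φ t * t ≤ c₂ * t ^ (r - 1) := by
    filter_upwards [Ioc_mem_nhdsGT hδ₀] with t ht using hb t ht.1 ht.2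
  exact tendsto_of_tendsto_of_tendsto_of_le_of_le' (hpow c₁) (hpow c₂) (hev.mono fun _ h => h.1)
    (hev.mono fun _ h => h.2)

lemma hasDerivAt_Phi (hm : Continuous (momentum φ)) (p : ℝ) :
    HasDerivAt (Phi φ) (momentum φ p) p := by
  have h := (hm.integral_hasStrictDerivAt 0 p).hasDerivAt
  exact h.congr_of_eventuallyEq (Eventually.of_forall fun s => Phi_eq_integral_momentum s)

lemma continuous_kineticEnergy (hm : Continuous (momentum φ)) :
    Continuous (kineticEnergy φ) :=
  (continuous_id.mul hm).sub
    (continuous_iff_continuousAt.mpr fun p => (hasDerivAt_Phi hm p).continuousAt)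

lemma kineticEnergy_zero : kineticEnergy φ 0 = 0 := by
  rw [kineticEnergy, Phi_zero, zero_mul, sub_zero]

lemma kineticEnergy_abs (p : ℝ) : kineticEnergy φ |p| = kineticEnergy φ p := by
  rcases abs_choice p with h | h <;> rw [h]
  simp only [kineticEnergy, momentum_neg, Phi_neg, neg_mul_neg]

lemma hasDerivAt_kineticEnergy (hm : Continuous (momentum φ)) {p : ℝ}
    (hφ : DifferentiableAt ℝ φ p) (hp : 0 < p) :
    HasDerivAt (kineticEnergy φ) (p * deriv (fun s => φ s * s) p) p := by
  have hF : HasDerivAt (fun s => φ s * s) (deriv (fun s => φ s * s) p) p :=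
    (hφ.mul differentiableAt_id).hasDerivAt
  have h : HasDerivAt (fun s => s * (φ s * s) - Phi φ s)
      (1 * (φ p * p) + p * deriv (fun s => φ s * s) p - momentum φ p) p :=
    ((hasDerivAt_id p).mul hF).sub (hasDerivAt_Phi hm p)
  have hev : kineticEnergy φ =ᶠ[𝓝 p] fun s => s * (φ s * s) - Phi φ s := by
    filter_upwards [Ioi_mem_nhds hp] with s hs
    rw [kineticEnergy, momentum_of_nonneg (le_of_lt hs)]
  refine (h.congr_of_eventuallyEq hev).congr_deriv ?_
  rw [momentum_of_nonneg hp.le]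
  ring

lemma strictMonoOn_kineticEnergy (hm : Continuous (momentum φ))
    (hφ : DifferentiableOn ℝ φ (Ioi 0)) (hφ1 : ∀ t > 0, 0 < deriv (fun s => φ s * s) t) :
    StrictMonoOn (kineticEnergy φ) (Ici 0) := by
  refine strictMonoOn_of_deriv_pos (convex_Ici 0) (continuous_kineticEnergy hm).continuousOn
    fun p hp => ?_
  rw [interior_Ici] at hp
  rw [(hasDerivAt_kineticEnergy hm (hφ.differentiableAt (Ioi_mem_nhds hp)) hp).deriv]
  exact mul_pos hp (hφ1 p hp)

lemma kineticEnergy_pos (hm : Continuous (momentum φ)) (hφ : DifferentiableOn ℝ φ (Ioi 0))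
    (hφ1 : ∀ t > 0, 0 < deriv (fun s => φ s * s) t) {p : ℝ} (hp : p ≠ 0) :
    0 < kineticEnergy φ p := by
  have h := strictMonoOn_kineticEnergy hm hφ hφ1 self_mem_Ici (abs_nonneg p) (abs_pos.mpr hp)
  rwa [kineticEnergy_zero, kineticEnergy_abs] at h

lemma Phi_le_rpow (hm : Continuous (momentum φ)) {c δ₀ r : ℝ} (hr : 0 < r)
    (hc : ∀ t, 0 < t → t ≤ δ₀ → φ t * t ≤ c * t ^ (r - 1)) {y : ℝ} (hy : 0 ≤ y)
    (hyδ : y ≤ δ₀) : Phi φ y ≤ c / r * y ^ r := by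
  have hint : ∫ s in (0:ℝ)..y, c * s ^ (r - 1) = c / r * y ^ r := by
    rw [intervalIntegral.integral_const_mul, integral_rpow (Or.inl (by linarith)),
      sub_add_cancel, zero_rpow hr.ne']
    ring
  rw [Phi_eq_integral_momentum, ← hint]
  refine intervalIntegral.integral_mono_on_of_le_Ioo hy (hm.intervalIntegrable _ _)
    ((intervalIntegral.intervalIntegrable_rpow' (by linarith)).const_mul c) fun s hs => ?_
  rw [momentum_of_nonneg hs.1.le]
  exact hc s hs.1 (hs.2.le.trans hyδ)

lemma rpow_le_kineticEnergy (hm : Continuous (momentum φ)) (hφ : DifferentiableOn ℝ φ (Ioi 0))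
    (hφpos : ∀ t > 0, 0 < φ t) {l c δ₀ r : ℝ} (hl : 1 ≤ l) (hr : 0 < r)
    (hφl : ∀ t > 0, l - 1 ≤ deriv (fun s => φ s * s) t / φ t)
    (hc : ∀ t, 0 < t → t ≤ δ₀ → c * t ^ (r - 1) ≤ φ t * t) {p : ℝ} (hp : 0 ≤ p)
    (hpδ : p ≤ δ₀) : (l - 1) * c / r * p ^ r ≤ kineticEnergy φ p := by
  set W := fun s => kineticEnergy φ s - (l - 1) * c / r * s ^ r
  have hW : ∀ s ∈ Ioo 0 p, HasDerivAt W
      (s * deriv (fun u => φ u * u) s - (l - 1) * c / r * (r * s ^ (r - 1))) s := fun s hs =>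
    (hasDerivAt_kineticEnergy hm (hφ.differentiableAt (Ioi_mem_nhds hs.1)) hs.1).sub
      ((hasDerivAt_rpow_const (Or.inl hs.1.ne')).const_mul _)
  have hW' : ∀ s ∈ Ioo 0 p,
      0 ≤ s * deriv (fun u => φ u * u) s - (l - 1) * c / r * (r * s ^ (r - 1)) := by
    intro s hs
    have hD : (l - 1) * φ s ≤ deriv (fun u => φ u * u) s :=
      (le_div_iff₀ (hφpos s hs.1)).mp (hφl s hs.1)
    have hφs : c * s ^ (r - 1) ≤ φ s * s := hc s hs.1 (hs.2.le.trans hpδ)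
    have hκ : (l - 1) * c / r * (r * s ^ (r - 1)) = (l - 1) * (c * s ^ (r - 1)) := by
      field_simp
    rw [hκ]
    nlinarith [hs.1]
  have hmono : MonotoneOn W (Icc 0 p) := by
    refine monotoneOn_of_deriv_nonneg (convex_Icc 0 p)
      ((continuous_kineticEnergy hm).sub
        (continuous_const.mul (continuous_rpow_const hr.le))).continuousOn
      (fun s hs => ?_) (fun s hs => ?_)
    · rw [interior_Icc] at hs
      exact (hW s hs).differentiableAt.differentiableWithinAt
    · rw [interior_Icc] at hs
      rw [(hW s hs).deriv]
      exact hW' s hs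
  have h := hmono (left_mem_Icc.mpr hp) (right_mem_Icc.mpr hp) hp
  simp only [W, kineticEnergy_zero, zero_rpow hr.ne', mul_zero, sub_zero] at h
  linarith

lemma abs_le_mul_of_kineticEnergy_le (hm : Continuous (momentum φ))
    (hφ : DifferentiableOn ℝ φ (Ioi 0)) (hφpos : ∀ t > 0, 0 < φ t) {l c₁ c₂ δ₀ r a : ℝ}
    (hl : 1 < l) (hc₁ : 0 < c₁) (hc₂ : 0 ≤ c₂) (hr : 0 < r) (ha : 0 ≤ a)
    (hφl : ∀ t > 0, l - 1 ≤ deriv (fun s => φ s * s) t / φ t)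
    (hb : ∀ t, 0 < t → t ≤ δ₀ → c₁ * t ^ (r - 1) ≤ φ t * t ∧ φ t * t ≤ c₂ * t ^ (r - 1))
    {p y : ℝ} (hp : |p| ≤ δ₀) (hy : 0 ≤ y) (hyδ : y ≤ δ₀)
    (h : kineticEnergy φ p ≤ a * Phi φ y) :
    |p| ≤ (a * c₂ / ((l - 1) * c₁)) ^ r⁻¹ * y := by
  set A := a * c₂ / ((l - 1) * c₁)
  have hl' : 0 < l - 1 := by linarith
  have hA : 0 ≤ A := by positivity
  have hlow := rpow_le_kineticEnergy hm hφ hφpos hl.le hr hφl (fun t h0 h1 => (hb t h0 h1).1)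
    (abs_nonneg p) hp
  have hup := Phi_le_rpow hm hr (fun t h0 h1 => (hb t h0 h1).2) hy hyδ
  rw [kineticEnergy_abs] at hlow
  have hpow : |p| ^ r ≤ A * y ^ r := by
    have h' : (l - 1) * c₁ / r * |p| ^ r ≤ (l - 1) * c₁ / r * (A * y ^ r) := by
      calc (l - 1) * c₁ / r * |p| ^ r ≤ a * Phi φ y := hlow.trans h
        _ ≤ a * (c₂ / r * y ^ r) := mul_le_mul_of_nonneg_left hup ha
        _ = (l - 1) * c₁ / r * (A * y ^ r) := by simp only [A]; field_simp
    exact le_of_mul_le_mul_left h' (by positivity)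
  rwa [← rpow_le_rpow_iff (abs_nonneg p) (by positivity) hr, mul_rpow (by positivity) hy,
    rpow_inv_rpow hA hr.ne']

lemma _root_.IsClassicalSolution.hasDerivAt_momentum {V q : ℝ → ℝ}
    (hq : IsClassicalSolution φ V q) (t : ℝ) :
    HasDerivAt (fun s => momentum φ (deriv q s)) (deriv V (q t)) t := by
  refine (hq.2 t).congr_of_eventuallyEq (Eventually.of_forall fun s => ?_)
  by_cases h : deriv q s = 0 <;> simp [momentum, h]

lemma exists_seq_tendsto_deriv_zero {q : ℝ → ℝ} {α : ℝ} (hq : Differentiable ℝ q)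
    (hqtop : Tendsto q atTop (𝓝 α)) :
    ∃ ξ : ℕ → ℝ, Tendsto ξ atTop atTop ∧ Tendsto (fun n => deriv q (ξ n)) atTop (𝓝 0) := by
  have hmvt : ∀ n : ℕ, ∃ ξ ∈ Ioo (n : ℝ) (n + 1), deriv q ξ = q (n + 1) - q n := by
    intro n
    obtain ⟨ξ, hξ, h⟩ := exists_deriv_eq_slope q (lt_add_one (n : ℝ)) hq.continuous.continuousOn
      hq.differentiableOn
    exact ⟨ξ, hξ, by rw [h, add_sub_cancel_left, div_one]⟩
  choose ξ hξ hξq using hmvt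
  refine ⟨ξ, tendsto_atTop_mono (fun n => (hξ n).1.le) tendsto_natCast_atTop_atTop, ?_⟩
  simp only [hξq]
  have h := (hqtop.comp (tendsto_atTop_add_const_right _ 1 tendsto_natCast_atTop_atTop)).sub
    (hqtop.comp tendsto_natCast_atTop_atTop)
  rwa [sub_self] at h

lemma kineticEnergy_deriv_eq {V q : ℝ → ℝ} {α : ℝ} (hm : Continuous (momentum φ))
    (hV : Differentiable ℝ V) (hVα : V α = 0) (hq : IsClassicalSolution φ V q)
    (hq' : Differentiable ℝ (deriv q)) (hqtop : Tendsto q atTop (𝓝 α)) (t : ℝ) :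
    kineticEnergy φ (deriv q t) = V (q t) := by
  set E := fun t => kineticEnergy φ (deriv q t) - V (q t)
  have hE : ∀ t, HasDerivAt E 0 t := by
    intro t
    have h : HasDerivAt E (deriv (deriv q) t * momentum φ (deriv q t) +
        deriv q t * deriv V (q t) - momentum φ (deriv q t) * deriv (deriv q) t -
        deriv V (q t) * deriv q t) t :=
      (((hq' t).hasDerivAt.mul (hq.hasDerivAt_momentum t)).sub
        ((hasDerivAt_Phi hm _).comp t (hq' t).hasDerivAt)).sub
        ((hV (q t)).hasDerivAt.comp t (hq.1 t).hasDerivAt)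
    exact h.congr_deriv (by ring)
  have hconst : ∀ t, E t = E 0 := fun t =>
    is_const_of_deriv_eq_zero (fun s => (hE s).differentiableAt) (fun s => (hE s).deriv) t 0
  obtain ⟨ξ, hξ, hξ'⟩ := exists_seq_tendsto_deriv_zero hq.1 hqtop
  have hlim : Tendsto (fun n => E (ξ n)) atTop (𝓝 0) := by
    have h := (((continuous_kineticEnergy hm).tendsto 0).comp hξ').sub
      ((hV.continuous.tendsto α).comp (hqtop.comp hξ))
    rwa [kineticEnergy_zero, hVα, sub_zero] at h
  simp only [hconst] at hlim
  have hE0 : E 0 = 0 := tendsto_const_nhds_iff.mp hlim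
  have ht : E t = 0 := (hconst t).trans hE0
  exact sub_eq_zero.mp ht

lemma pos_of_hasDerivAt_ge_neg_mul {u u' : ℝ → ℝ} {a b K : ℝ} (hab : a ≤ b)
    (hu : ∀ t ∈ Icc a b, HasDerivAt u (u' t) t) (hbound : ∀ t ∈ Icc a b, -(K * u t) ≤ u' t)
    (ha : 0 < u a) : 0 < u b := by
  have hv : ∀ t ∈ Icc a b, HasDerivAt (fun s => u s * exp (K * s))
      ((u' t + K * u t) * exp (K * t)) t := by
    intro t ht
    have he : HasDerivAt (fun s => exp (K * s)) (exp (K * t) * K) t := by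
      simpa using ((hasDerivAt_id t).const_mul K).exp
    exact ((hu t ht).mul he).congr_deriv (by ring)
  have hmono : MonotoneOn (fun s => u s * exp (K * s)) (Icc a b) := by
    refine monotoneOn_of_deriv_nonneg (convex_Icc a b)
      (fun t ht => (hv t ht).continuousAt.continuousWithinAt) (fun t ht => ?_) (fun t ht => ?_)
    · rw [interior_Icc] at ht
      exact (hv t (Ioo_subset_Icc_self ht)).differentiableAt.differentiableWithinAt
    · rw [interior_Icc] at ht
      rw [(hv t (Ioo_subset_Icc_self ht)).deriv]
      have := hbound t (Ioo_subset_Icc_self ht)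
      exact mul_nonneg (by linarith) (exp_pos _).le
  have h := hmono (left_mem_Icc.mpr hab) (right_mem_Icc.mpr hab) hab
  exact (mul_pos_iff_of_pos_right (exp_pos (K * b))).mp
    ((mul_pos ha (exp_pos _)).trans_le h)

lemma exists_first_eq {f : ℝ → ℝ} {a b c : ℝ} (hf : Continuous f) (hab : a ≤ b)
    (ha : f a < c) (hb : c ≤ f b) : ∃ t ∈ Ioc a b, f t = c ∧ ∀ s ∈ Ico a t, f s < c := by
  set S := Icc a b ∩ f ⁻¹' {c}
  have hS : S.Nonempty := by
    obtain ⟨s, hs, hfs⟩ := intermediate_value_Icc hab hf.continuousOn ⟨ha.le, hb⟩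
    exact ⟨s, hs, hfs⟩
  have hSb : BddBelow S := bddBelow_Icc.mono inter_subset_left
  have ht : sInf S ∈ S := (isClosed_Icc.inter (isClosed_singleton.preimage hf)).csInf_mem hS hSb
  have hfirst : ∀ s ∈ Ico a (sInf S), f s < c := by
    intro s hs
    by_contra! hfs
    obtain ⟨s', hs', hfs'⟩ := intermediate_value_Icc hs.1 hf.continuousOn ⟨ha.le, hfs⟩
    have : sInf S ≤ s' := csInf_le hSb ⟨⟨hs'.1, hs'.2.trans (hs.2.le.trans ht.1.2)⟩, hfs'⟩
    linarith [hs'.2, hs.2]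
  refine ⟨sInf S, ⟨lt_of_le_of_ne ht.1.1 fun h => ?_, ht.1.2⟩, ht.2, hfirst⟩
  have := ht.2
  rw [mem_preimage, ← h, mem_singleton_iff] at this
  linarith

lemma lt_of_abs_deriv_le_mul {q : ℝ → ℝ} {α K ε η : ℝ} (hq : Differentiable ℝ q)
    (hqc : Continuous (deriv q)) (hε : 0 < ε) (hη : 0 < η) (hbot : ∀ᶠ t in atBot, q t < α)
    (hstop : ∀ t, q t = α → deriv q t = 0)
    (hlip : ∀ t, α - ε < q t → q t ≤ α → |deriv q t| ≤ η → |deriv q t| ≤ K * (α - q t))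
    (t : ℝ) : q t < α := by
  by_contra! ht
  obtain ⟨tb, hqtb, htb⟩ := (hbot.and (eventually_le_atBot t)).exists
  obtain ⟨t₃, ht₃, hqt₃, hfirst⟩ := exists_first_eq hq.continuous htb hqtb ht
  have hnear : ∀ᶠ s in 𝓝 t₃, α - ε < q s ∧ |deriv q s| ≤ η := by
    have h1 := hq.continuous.continuousAt (x := t₃)
    have h2 := hqc.continuousAt (x := t₃)
    rw [ContinuousAt, hqt₃] at h1
    rw [ContinuousAt, hstop t₃ hqt₃] at h2
    exact (h1.eventually (Ioi_mem_nhds (by linarith))).and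
      (h2.eventually (Metric.closedBall_mem_nhds 0 hη) |>.mono fun s hs => by
        simpa [Real.dist_eq] using hs)
  obtain ⟨l, hl, hlt₃⟩ := exists_Ioc_subset_of_mem_nhds' hnear ht₃.1
  obtain ⟨a, hla, hat₃⟩ := exists_between hl.2
  have hbound : ∀ s ∈ Icc a t₃, -(K * (α - q s)) ≤ -deriv q s := by
    intro s hs
    obtain ⟨h1, h2⟩ := hlt₃ ⟨hla.trans_le hs.1, hs.2⟩
    have hle : q s ≤ α := by
      rcases hs.2.lt_or_eq with h | h
      · exact (hfirst s ⟨hl.1.trans (hla.trans_le hs.1).le, h⟩).le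
      · rw [h, hqt₃]
    linarith [le_abs_self (deriv q s), hlip s h1 hle h2]
  have hpos := pos_of_hasDerivAt_ge_neg_mul (u := fun s => α - q s) hat₃.le
    (fun s _ => (hq s).hasDerivAt.const_sub α) hbound
    (sub_pos.mpr (hfirst a ⟨hl.1.trans hla.le, hat₃⟩))
  simp only [hqt₃, sub_self, lt_irrefl] at hpos

lemma lt_of_kineticEnergy_le_mul_Phi (hm : Continuous (momentum φ))
    (hφ : DifferentiableOn ℝ φ (Ioi 0)) (hφpos : ∀ t > 0, 0 < φ t)
    (hφ1 : ∀ t > 0, 0 < deriv (fun s => φ s * s) t) {l c₁ c₂ δ₀ r a δ α : ℝ}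
    (hl : 1 < l) (hc₁ : 0 < c₁) (hc₂ : 0 ≤ c₂) (hδ₀ : 0 < δ₀) (hr : 0 < r) (ha : 0 ≤ a)
    (hδ : 0 < δ) (hφl : ∀ t > 0, l - 1 ≤ deriv (fun s => φ s * s) t / φ t)
    (hb : ∀ t, 0 < t → t ≤ δ₀ → c₁ * t ^ (r - 1) ≤ φ t * t ∧ φ t * t ≤ c₂ * t ^ (r - 1))
    {q : ℝ → ℝ} (hq : Differentiable ℝ q) (hqc : Continuous (deriv q))
    (hbot : ∀ᶠ t in atBot, q t < α)
    (hE : ∀ t, α - δ < q t → q t ≤ α → kineticEnergy φ (deriv q t) ≤ a * Phi φ (α - q t))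
    (t : ℝ) : q t < α := by
  refine lt_of_abs_deriv_le_mul (K := (a * c₂ / ((l - 1) * c₁)) ^ r⁻¹) hq hqc (lt_min hδ hδ₀)
    hδ₀ hbot (fun s hs => ?_) (fun s h1 h2 h3 => ?_) t
  · by_contra hne
    have h := hE s (by linarith) hs.le
    rw [hs, sub_self, Phi_zero, mul_zero] at h
    exact (kineticEnergy_pos hm hφ hφ1 hne).not_ge h
  · exact abs_le_mul_of_kineticEnergy_le hm hφ hφpos hl hc₁ hc₂ hr ha hφl hb h3
      (sub_nonneg.mpr h2) (by linarith [min_le_right δ δ₀])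
      (hE s (by linarith [min_le_left δ δ₀]) h2)

lemma mem_Ioo_of_kineticEnergy_eq {V : ℝ → ℝ} (hm : Continuous (momentum φ))
    (hφ : DifferentiableOn ℝ φ (Ioi 0)) (hφpos : ∀ t > 0, 0 < φ t)
    (hφ1 : ∀ t > 0, 0 < deriv (fun s => φ s * s) t) {l c₁ c₂ δ₀ r a₂ a₄ δ α : ℝ}
    (hl : 1 < l) (hc₁ : 0 < c₁) (hc₂ : 0 ≤ c₂) (hδ₀ : 0 < δ₀) (hr : 0 < r) (ha₂ : 0 ≤ a₂)
    (ha₄ : 0 ≤ a₄) (hδ : 0 < δ) (hα : 0 < α)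
    (hφl : ∀ t > 0, l - 1 ≤ deriv (fun s => φ s * s) t / φ t)
    (hb : ∀ t, 0 < t → t ≤ δ₀ → c₁ * t ^ (r - 1) ≤ φ t * t ∧ φ t * t ≤ c₂ * t ^ (r - 1))
    (hVα : ∀ x, α - δ < x → x ≤ α → V x ≤ a₂ * Phi φ |x - α|)
    (hVmα : ∀ x, -α ≤ x → x < -α + δ → V x ≤ a₄ * Phi φ |x + α|)
    {q : ℝ → ℝ} (hq : Differentiable ℝ q) (hqc : Continuous (deriv q))
    (hqtop : Tendsto q atTop (𝓝 α)) (hqbot : Tendsto q atBot (𝓝 (-α)))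
    (henergy : ∀ t, kineticEnergy φ (deriv q t) = V (q t)) (t : ℝ) : q t ∈ Ioo (-α) α := by
  have hαα : -α < α := by linarith
  have hupper := lt_of_kineticEnergy_le_mul_Phi hm hφ hφpos hφ1 hl hc₁ hc₂ hδ₀ hr ha₂ hδ hφl hb
    hq hqc (hqbot.eventually (gt_mem_nhds hαα)) fun s h1 h2 => by
      rw [henergy, ← Phi_abs, abs_sub_comm]
      exact hVα _ h1 h2
  have hder : ∀ s, deriv (fun s => -q (-s)) s = deriv q (-s) := fun s => by
    rw [deriv.fun_neg, deriv_comp_neg, neg_neg]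
  have hlower := lt_of_kineticEnergy_le_mul_Phi (q := fun s => -q (-s)) hm hφ hφpos hφ1 hl hc₁
    hc₂ hδ₀ hr ha₄ hδ hφl hb (by fun_prop) (by rw [funext hder]; exact hqc.comp continuous_neg)
    (tendsto_neg_atBot_atTop.eventually (hqtop.eventually (lt_mem_nhds hαα)) |>.mono
      fun s (hs : -α < q (-s)) => by linarith)
    (fun s h1 h2 => by
      rw [hder, henergy, ← Phi_abs, show α - -q (-s) = q (-s) + α by ring]
      exact hVmα _ (by linarith) (by linarith)) (-t)
  simp only [neg_neg] at hlower
  exact ⟨by linarith, hupper t⟩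

lemma deriv_pos_of_ne_zero {q : ℝ → ℝ} {β t₀ : ℝ} (hq : Differentiable ℝ q)
    (hqc : Continuous (deriv q)) (hne : ∀ t, deriv q t ≠ 0) (hbot : Tendsto q atBot (𝓝 β))
    (h₀ : β < q t₀) (t : ℝ) : 0 < deriv q t := by
  obtain ⟨s, hs, hst⟩ := ((hbot.eventually (gt_mem_nhds h₀)).and (eventually_lt_atBot t₀)).exists
  obtain ⟨ξ, -, hξ⟩ := exists_deriv_eq_slope q hst hq.continuous.continuousOn hq.differentiableOn
  have hξpos : 0 < deriv q ξ := by
    rw [hξ]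
    exact div_pos (sub_pos.mpr hs) (sub_pos.mpr hst)
  by_contra! ht
  obtain ⟨x, -, hx⟩ := intermediate_value_uIcc hqc.continuousOn
    (mem_uIcc.mpr (Or.inl ⟨ht, hξpos.le⟩) : (0 : ℝ) ∈ uIcc (deriv q t) (deriv q ξ))
  exact hne x hx

end PhiLaplacian

lemma StrictMono.continuousAt_invFun {f : ℝ → ℝ} (hf : StrictMono f) {y : ℝ}
    (hy : range f ∈ 𝓝 y) : ContinuousAt (Function.invFun f) y := by
  have hinv := Function.leftInverse_invFun hf.injective
  refine continuousAt_of_monotoneOn_of_image_mem_nhds ?_ hy ?_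
  · rintro _ ⟨a, rfl⟩ _ ⟨b, rfl⟩ hab
    rw [hinv a, hinv b]
    exact hf.le_iff_le.mp hab
  · have himage : Function.invFun f '' range f = univ :=
      eq_univ_of_forall fun t => ⟨f t, mem_range_self t, hinv t⟩
    rw [himage]
    exact univ_mem

lemma range_eq_Ioo_of_tendsto {q : ℝ → ℝ} {a b : ℝ} (hq : Continuous q)
    (hbot : Tendsto q atBot (𝓝 a)) (htop : Tendsto q atTop (𝓝 b)) (hmem : ∀ t, q t ∈ Ioo a b) :
    range q = Ioo a b := by
  refine (range_subset_iff.mpr hmem).antisymm fun y hy =>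
    mem_range_of_exists_le_of_exists_ge hq ?_ ?_
  · exact (hbot.eventually (gt_mem_nhds hy.1)).exists.imp fun _ h => h.le
  · exact (htop.eventually (lt_mem_nhds hy.2)).exists.imp fun _ h => h.le

lemma exists_eq_comp_add_of_deriv_eq {q₁ q₂ : ℝ → ℝ} (hq₁ : Differentiable ℝ q₁)
    (hq₂ : Differentiable ℝ q₂) (hpos : ∀ t, 0 < deriv q₁ t) (hopen : IsOpen (range q₁))
    (hsub : range q₂ ⊆ range q₁) (hderiv : ∀ s t, q₁ s = q₂ t → deriv q₁ s = deriv q₂ t) :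
    ∃ τ, ∀ t, q₂ t = q₁ (t + τ) := by
  set w := Function.invFun q₁
  have hw : ∀ y ∈ range q₁, q₁ (w y) = y := fun y hy => Function.invFun_eq hy
  have hD : ∀ t, HasDerivAt (fun s => w (q₂ s) - s) 0 t := by
    intro t
    have hy : q₂ t ∈ range q₁ := hsub (mem_range_self t)
    have hwd : HasDerivAt w (deriv q₁ (w (q₂ t)))⁻¹ (q₂ t) :=
      HasDerivAt.of_local_left_inverse
        ((strictMono_of_deriv_pos hpos).continuousAt_invFun (hopen.mem_nhds hy))
        (hq₁ _).hasDerivAt (hpos _).ne' (eventually_of_mem (hopen.mem_nhds hy) hw)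
    have h := (hwd.comp t (hq₂ t).hasDerivAt).sub (hasDerivAt_id t)
    rwa [← hderiv _ t (hw _ hy), inv_mul_cancel₀ (hpos _).ne', sub_self] at h
  refine ⟨w (q₂ 0), fun t => ?_⟩
  have h := is_const_of_deriv_eq_zero (fun s => (hD s).differentiableAt) (fun s => (hD s).deriv) t 0
  rw [sub_zero] at h
  rw [← h, add_sub_cancel, hw _ (hsub (mem_range_self t))]

open PhiLaplacian in
theorem statement1_general (φ V : ℝ → ℝ) (l m α : ℝ) (q₁ q₂ : ℝ → ℝ)
    (hφC1 : ContDiffOn ℝ 1 φ (Set.Ioi 0))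
    (hφpos : ∀ t > 0, 0 < φ t)
    (hφ1 : ∀ t > 0, 0 < deriv (fun s => φ s * s) t)
    (hl : 1 < l)
    (hφ2 : ∀ t > 0, l - 1 ≤ deriv (fun s => φ s * s) t / φ t ∧
      deriv (fun s => φ s * s) t / φ t ≤ m - 1)
    (hφ3 : ∃ c₁ c₂ δ₀ r : ℝ, 0 < c₁ ∧ 0 < c₂ ∧ 0 < δ₀ ∧ 1 < r ∧
      ∀ t : ℝ, 0 < t → t ≤ δ₀ → c₁ * t ^ (r - 1) ≤ φ t * t ∧ φ t * t ≤ c₂ * t ^ (r - 1))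
    (hα : 0 < α)
    (hV1 : ContDiff ℝ 1 V)
    (hV2 : V α = 0 ∧ V (-α) = 0 ∧ ∀ t, -α < t → t < α → 0 < V t)
    (hV3 : ∃ a₁ a₂ a₃ a₄ δ : ℝ, 0 < a₁ ∧ 0 < a₂ ∧ 0 < a₃ ∧ 0 < a₄ ∧ 0 < δ ∧ δ < α ∧
      (∀ t, α - δ < t → t ≤ α → a₁ * Phi φ |t - α| ≤ V t ∧ V t ≤ a₂ * Phi φ |t - α|) ∧
      (∀ t, -α ≤ t → t < -α + δ → a₃ * Phi φ |t + α| ≤ V t ∧ V t ≤ a₄ * Phi φ |t + α|))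
    (hq₁ : IsClassicalSolution φ V q₁)
    (hq₁' : Differentiable ℝ (deriv q₁)) (hq₁c : Continuous (deriv q₁))
    (hq₁top : Tendsto q₁ atTop (nhds α)) (hq₁bot : Tendsto q₁ atBot (nhds (-α)))
    (hq₂ : IsClassicalSolution φ V q₂)
    (hq₂' : Differentiable ℝ (deriv q₂)) (hq₂c : Continuous (deriv q₂))
    (hq₂top : Tendsto q₂ atTop (nhds α)) (hq₂bot : Tendsto q₂ atBot (nhds (-α))) :
    ∃ τ : ℝ, ∀ t : ℝ, q₂ t = q₁ (t + τ) := by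
  obtain ⟨c₁, c₂, δ₀, r, hc₁, hc₂, hδ₀, hr, hb⟩ := hφ3
  obtain ⟨hVα, -, hVpos⟩ := hV2
  obtain ⟨_, a₂, _, a₄, δ, -, ha₂, -, ha₄, hδ, -, hVα_near, hVmα_near⟩ := hV3
  have hm := continuous_momentum hφC1.continuousOn (tendsto_mul_self_nhdsGT_zero hδ₀ hr hb)
  have hφd := hφC1.differentiableOn one_ne_zero
  have hprofile : ∀ q, IsClassicalSolution φ V q → Differentiable ℝ (deriv q) →
      Continuous (deriv q) → Tendsto q atTop (𝓝 α) → Tendsto q atBot (𝓝 (-α)) →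
      (∀ t, kineticEnergy φ (deriv q t) = V (q t)) ∧ (∀ t, q t ∈ Ioo (-α) α) ∧
        ∀ t, 0 < deriv q t := by
    intro q hq hq' hqc htop hbot
    have henergy := kineticEnergy_deriv_eq hm (hV1.differentiable one_ne_zero) hVα hq hq' htop
    have hmem := mem_Ioo_of_kineticEnergy_eq hm hφd hφpos hφ1 hl hc₁ hc₂.le hδ₀ (by linarith)
      ha₂.le ha₄.le hδ hα (fun t ht => (hφ2 t ht).1) hb (fun x h1 h2 => (hVα_near x h1 h2).2)
      (fun x h1 h2 => (hVmα_near x h1 h2).2) hq.1 hqc htop hbot henergy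
    refine ⟨henergy, hmem, deriv_pos_of_ne_zero hq.1 hqc (fun t h0 => ?_) hbot (hmem 0).1⟩
    have h := henergy t
    rw [h0, kineticEnergy_zero] at h
    exact (hVpos _ (hmem t).1 (hmem t).2).ne h
  obtain ⟨henergy₁, hmem₁, hpos₁⟩ := hprofile q₁ hq₁ hq₁' hq₁c hq₁top hq₁bot
  obtain ⟨henergy₂, hmem₂, hpos₂⟩ := hprofile q₂ hq₂ hq₂' hq₂c hq₂top hq₂bot
  have hrange := range_eq_Ioo_of_tendsto hq₁.1.continuous hq₁bot hq₁top hmem₁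
  refine exists_eq_comp_add_of_deriv_eq hq₁.1 hq₂.1 hpos₁ (hrange ▸ isOpen_Ioo)
    (hrange ▸ range_subset_iff.mpr hmem₂) fun s t hst => ?_
  exact (strictMonoOn_kineticEnergy hm hφd hφ1).injOn (hpos₁ s).le (hpos₂ t).le
    (by rw [henergy₁, henergy₂, hst])

theorem statement1 (φ V : ℝ → ℝ) (l m α : ℝ) (q₁ q₂ : ℝ → ℝ)
    (hφC1 : ContDiffOn ℝ 1 φ (Set.Ioi 0))
    (hφpos : ∀ t > 0, 0 < φ t)
    (hφ1 : ∀ t > 0, 0 < deriv (fun s => φ s * s) t)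
    (hl : 1 < l) (hlm : l ≤ m)
    (hφ2 : ∀ t > 0, l - 1 ≤ deriv (fun s => φ s * s) t / φ t ∧
      deriv (fun s => φ s * s) t / φ t ≤ m - 1)
    (hφ3 : ∃ c₁ c₂ δ₀ r : ℝ, 0 < c₁ ∧ 0 < c₂ ∧ 0 < δ₀ ∧ 1 < r ∧
      ∀ t : ℝ, 0 < t → t ≤ δ₀ → c₁ * t ^ (r - 1) ≤ φ t * t ∧ φ t * t ≤ c₂ * t ^ (r - 1))
    (hα : 0 < α)
    (hV1 : ContDiff ℝ 1 V) (hVnn : ∀ t, 0 ≤ V t)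
    (hV2 : V α = 0 ∧ V (-α) = 0 ∧ ∀ t, -α < t → t < α → 0 < V t)
    (hV3 : ∃ a₁ a₂ a₃ a₄ δ : ℝ, 0 < a₁ ∧ 0 < a₂ ∧ 0 < a₃ ∧ 0 < a₄ ∧ 0 < δ ∧ δ < α ∧
      (∀ t, α - δ < t → t ≤ α → a₁ * Phi φ |t - α| ≤ V t ∧ V t ≤ a₂ * Phi φ |t - α|) ∧
      (∀ t, -α ≤ t → t < -α + δ → a₃ * Phi φ |t + α| ≤ V t ∧ V t ≤ a₄ * Phi φ |t + α|))
    (hV4 : ∃ k₁ k₂ k₃ k₄ k₅ k₆ k₇ k₈ : ℝ, 0 < k₁ ∧ 0 < k₂ ∧ 0 < k₃ ∧ 0 < k₄ ∧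
      0 < k₅ ∧ 0 < k₆ ∧ 0 < k₇ ∧ 0 < k₈ ∧
      (∀ t, 0 ≤ t → t ≤ α →
        -(k₃ * t * φ (k₄ * |t - α|) * |t - α|) ≤ deriv V t ∧
        deriv V t ≤ -(k₁ * t * φ (k₂ * |t - α|) * |t - α|)) ∧
      (∀ t, -α ≤ t → t ≤ 0 →
        -(k₇ * t * φ (k₈ * |t + α|) * |t + α|) ≤ deriv V t ∧
        deriv V t ≤ -(k₅ * t * φ (k₆ * |t + α|) * |t + α|)))
    (hV5 : ∃ ρ > 0, StrictConvexOn ℝ (Set.Ioo (-α - ρ) (-α + ρ)) V ∧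
      StrictConvexOn ℝ (Set.Ioo (α - ρ) (α + ρ)) V)
    (hq₁ : IsClassicalSolution φ V q₁)
    (hq₁' : Differentiable ℝ (deriv q₁)) (hq₁c : Continuous (deriv q₁))
    (hq₁top : Tendsto q₁ atTop (nhds α)) (hq₁bot : Tendsto q₁ atBot (nhds (-α)))
    (hq₂ : IsClassicalSolution φ V q₂)
    (hq₂' : Differentiable ℝ (deriv q₂)) (hq₂c : Continuous (deriv q₂))
    (hq₂top : Tendsto q₂ atTop (nhds α)) (hq₂bot : Tendsto q₂ atBot (nhds (-α))) :
    ∃ τ : ℝ, ∀ t : ℝ, q₂ t = q₁ (t + τ) :=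
  statement1_general φ V l m α q₁ q₂ hφC1 hφpos hφ1 hl hφ2 hφ3 hα hV1 hV2 hV3 hq₁ hq₁' hq₁c hq₁top
    hq₁bot hq₂ hq₂' hq₂c hq₂top hq₂bot
end

section
/- Assume (φ1)–(φ4) and (V1)–(V5), and let q be a heteroclinic solution of problem (P). Then there exist constants β₁, β₂, β₃, β₄ > 0 such that 0 < q'(t) ≤ β₁ e^{−β₂ t} for all t ≥ 0 and 0 < q'(t) ≤ β₃ e^{β₄ t} for all t ≤ 0. -/
/-!
Multiplying the equation by `q'` shows that `φ(|q'|) q'² - Φ(q') - V(q)` is constant along `q`;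
it tends to `0` along a sequence `tₙ → ∞` with `q'(tₙ) → 0`, so `W(q') = V(q)` where
`W(s) = φ(|s|) s² - Φ(s)` is `kineticEnergy φ s`. By (φ2), `W` is comparable with `Φ`; by (φ3),
`Φ(s)` is comparable with `s ^ r` near `0`; by (V3), `V(x)` is comparable with `Φ(α - x)` below
`α`. Hence `q' ≍ α - q` while `q` is close to `α`. The upper bound `q' ≤ C (α - q)` keeps `α - q`
from vanishing in finite time, so `|q| < α` and `W(q') = V(q) > 0`: `q'` never vanishes, and is
positive. The lower bound `α - q ≤ C' q'` makes `α - q`, hence `q'`, decay exponentially. The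
case `t → -∞` is the same argument for `t ↦ -q (-t)` and the potential `V (-·)`.
-/

open Real Filter Set MeasureTheory

open Topology

section Phi

variable {φ : ℝ → ℝ}

theorem Phi_eq_integral (t : ℝ) : Phi φ t = ∫ s in (0:ℝ)..t, s * φ |s| := by
  have hcongr : ∀ u, 0 ≤ u → ∫ s in (0:ℝ)..u, s * φ s = ∫ s in (0:ℝ)..u, s * φ |s| := fun u hu =>
    intervalIntegral.integral_congr fun s hs => by
      rw [uIcc_of_le hu] at hs
      rw [abs_of_nonneg hs.1]
  rcases le_total 0 t with ht | ht
  · rw [Phi, abs_of_nonneg ht, hcongr t ht]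
  · rw [Phi, abs_of_nonpos ht, hcongr (-t) (neg_nonneg.2 ht)]
    have := intervalIntegral.integral_comp_neg (a := 0) (b := -t) fun s => s * φ |s|
    simp only [abs_neg, neg_mul, intervalIntegral.integral_neg, neg_neg, neg_zero] at this
    rw [intervalIntegral.integral_symm 0 t] at this
    linarith

theorem continuous_mul_comp_abs (hφ : ContinuousOn φ (Ici 0)) :
    Continuous fun s => s * φ |s| :=
  continuous_id.mul (hφ.comp_continuous continuous_abs fun s => abs_nonneg s)

theorem hasDerivAt_Phi (hφ : ContinuousOn φ (Ici 0)) (t : ℝ) :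
    HasDerivAt (Phi φ) (t * φ |t|) t := by
  rw [show Phi φ = _ from funext Phi_eq_integral]
  exact ((continuous_mul_comp_abs hφ).integral_hasStrictDerivAt 0 t).hasDerivAt

theorem continuous_Phi (hφ : ContinuousOn φ (Ici 0)) : Continuous (Phi φ) :=
  continuous_iff_continuousAt.2 fun t => (hasDerivAt_Phi hφ t).continuousAt

theorem Phi_abs (t : ℝ) : Phi φ |t| = Phi φ t := by simp [Phi]

theorem Phi_zero : Phi φ 0 = 0 := by simp [Phi]

theorem strictMonoOn_Phi (hφ : ContinuousOn φ (Ici 0)) (hφpos : ∀ t > 0, 0 < φ t) :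
    StrictMonoOn (Phi φ) (Ici 0) := by
  refine strictMonoOn_of_deriv_pos (convex_Ici 0) (continuous_Phi hφ).continuousOn fun t ht => ?_
  rw [interior_Ici] at ht
  rw [(hasDerivAt_Phi hφ t).deriv, abs_of_pos ht]
  exact mul_pos ht (hφpos t ht)

theorem Phi_pos (hφ : ContinuousOn φ (Ici 0)) (hφpos : ∀ t > 0, 0 < φ t) {t : ℝ} (ht : t ≠ 0) :
    0 < Phi φ t := by
  have := strictMonoOn_Phi hφ hφpos self_mem_Ici (abs_nonneg t) (abs_pos.2 ht)
  rwa [Phi_zero, Phi_abs] at this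

theorem Phi_rpow_bounds (hφ : ContinuousOn φ (Ici 0)) {c₁ c₂ δ₀ r : ℝ} (hr : 1 < r)
    (h : ∀ t : ℝ, 0 < t → t ≤ δ₀ → c₁ * t ^ (r - 1) ≤ φ t * t ∧ φ t * t ≤ c₂ * t ^ (r - 1))
    {s : ℝ} (hs : 0 ≤ s) (hsδ : s ≤ δ₀) :
    c₁ / r * s ^ r ≤ Phi φ s ∧ Phi φ s ≤ c₂ / r * s ^ r := by
  have hrpow : ∀ c, ∫ x in (0:ℝ)..s, c * x ^ (r - 1) = c / r * s ^ r := fun c => by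
    rw [intervalIntegral.integral_const_mul, integral_rpow (Or.inl (by linarith)), sub_add_cancel,
      zero_rpow (by linarith : r ≠ 0)]
    ring
  have hint := (continuous_mul_comp_abs hφ).intervalIntegrable (μ := volume) 0 s
  have hint' : ∀ c : ℝ, IntervalIntegrable (fun x => c * x ^ (r - 1)) volume 0 s := fun c =>
    (continuous_const.mul (continuous_rpow_const (by linarith))).intervalIntegrable 0 s
  have hφx : ∀ x ∈ Ioo 0 s, x * φ |x| = φ x * x := fun x hx => by rw [abs_of_pos hx.1, mul_comm]
  rw [Phi_eq_integral, ← hrpow, ← hrpow]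
  exact ⟨intervalIntegral.integral_mono_on_of_le_Ioo hs (hint' c₁) hint fun x hx =>
      hφx x hx ▸ (h x hx.1 (hx.2.le.trans hsδ)).1,
    intervalIntegral.integral_mono_on_of_le_Ioo hs hint (hint' c₂) fun x hx =>
      hφx x hx ▸ (h x hx.1 (hx.2.le.trans hsδ)).2⟩

theorem le_rpow_inv_mul_of_mul_Phi_le {c₁ c₂ δ₀ r : ℝ} (hc₁ : 0 < c₁) (hc₂ : 0 ≤ c₂) (hr : 0 < r)
    (hΦ : ∀ s, 0 ≤ s → s ≤ δ₀ → c₁ / r * s ^ r ≤ Phi φ s ∧ Phi φ s ≤ c₂ / r * s ^ r)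
    {A B u p : ℝ} (hA : 0 < A) (hB : 0 ≤ B) (hu : 0 ≤ u) (huδ : u ≤ δ₀) (hp : 0 ≤ p)
    (hpδ : p ≤ δ₀) (h : A * Phi φ u ≤ B * Phi φ p) :
    u ≤ (B * c₂ / (A * c₁)) ^ r⁻¹ * p := by
  have hK : 0 ≤ B * c₂ / (A * c₁) := by positivity
  have hpow : u ^ r ≤ B * c₂ / (A * c₁) * p ^ r := by
    rw [div_mul_eq_mul_div, le_div_iff₀ (by positivity)]
    have : A * (c₁ / r * u ^ r) ≤ B * (c₂ / r * p ^ r) :=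
      (mul_le_mul_of_nonneg_left (hΦ u hu huδ).1 hA.le).trans
        (h.trans (mul_le_mul_of_nonneg_left (hΦ p hp hpδ).2 hB))
    field_simp at this
    linarith
  rwa [← rpow_le_rpow_iff hu (by positivity) hr, mul_rpow (by positivity) (by positivity),
    rpow_inv_rpow hK hr.ne']

end Phi

/-- The kinetic part `s Φ'(s) - Φ(s)` of the Hamiltonian of the Lagrangian `Φ(q') + V(q)`. -/
noncomputable def kineticEnergy (φ : ℝ → ℝ) (s : ℝ) : ℝ := φ |s| * s * s - Phi φ s

section kineticEnergy

variable {φ : ℝ → ℝ}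

theorem kineticEnergy_neg (s : ℝ) : kineticEnergy φ (-s) = kineticEnergy φ s := by
  rw [kineticEnergy, kineticEnergy, abs_neg, ← Phi_abs (-s), abs_neg, Phi_abs]
  ring

theorem kineticEnergy_zero : kineticEnergy φ 0 = 0 := by simp [kineticEnergy, Phi_zero]

theorem continuous_kineticEnergy (hφ : ContinuousOn φ (Ici 0)) : Continuous (kineticEnergy φ) :=
  ((hφ.comp_continuous continuous_abs fun s => abs_nonneg s).mul continuous_id |>.mul
    continuous_id).sub (continuous_Phi hφ)

theorem hasDerivAt_kineticEnergy_sub_mul_Phi (hφ : ContinuousOn φ (Ici 0)) {s : ℝ}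
    (hφs : DifferentiableAt ℝ φ s) (hs : 0 < s) (k : ℝ) :
    HasDerivAt (fun x => kineticEnergy φ x - k * Phi φ x)
      (s * (deriv (fun x => φ x * x) s - k * φ s)) s := by
  have hg : HasDerivAt (fun x => φ x * x) (deriv (fun x => φ x * x) s) s :=
    (hφs.mul differentiableAt_id).hasDerivAt
  have hΦ := hasDerivAt_Phi hφ s
  rw [abs_of_pos hs] at hΦ
  have hW := ((hg.mul (hasDerivAt_id s)).sub hΦ).sub (hΦ.const_mul k)
  refine (hW.congr_of_eventuallyEq ?_).congr_deriv (by simp only [id]; ring)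
  filter_upwards [Ioi_mem_nhds hs] with x (hx : 0 < x)
  simp only [kineticEnergy, abs_of_pos hx, Pi.mul_apply, Pi.sub_apply, id]

theorem kineticEnergy_bounds (hφC1 : ContDiffOn ℝ 1 φ (Ioi 0)) (hφ : ContinuousOn φ (Ici 0))
    {l m : ℝ} (hφ2 : ∀ t > 0, l - 1 ≤ deriv (fun s => φ s * s) t / φ t ∧
      deriv (fun s => φ s * s) t / φ t ≤ m - 1) (hφpos : ∀ t > 0, 0 < φ t) (s : ℝ) :
    (l - 1) * Phi φ s ≤ kineticEnergy φ s ∧ kineticEnergy φ s ≤ (m - 1) * Phi φ s := by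
  wlog hs : 0 ≤ s generalizing s
  · simpa only [kineticEnergy_neg, ← Phi_abs (-s), abs_neg, Phi_abs] using this (-s) (by linarith)
  have hderiv (k x : ℝ) (hx : x ∈ interior (Ici (0:ℝ))) :
      HasDerivAt (fun x => kineticEnergy φ x - k * Phi φ x)
        (x * (deriv (fun x => φ x * x) x - k * φ x)) x := by
    rw [interior_Ici] at hx
    exact (hasDerivAt_kineticEnergy_sub_mul_Phi hφ
      ((hφC1.differentiableOn one_ne_zero).differentiableAt (Ioi_mem_nhds hx)) hx k)
  have hcont (k : ℝ) : ContinuousOn (fun x => kineticEnergy φ x - k * Phi φ x) (Ici 0) :=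
    ((continuous_kineticEnergy hφ).sub (continuous_const.mul (continuous_Phi hφ))).continuousOn
  have hmono := monotoneOn_of_hasDerivWithinAt_nonneg (convex_Ici 0) (hcont (l - 1))
    (fun x hx => (hderiv _ x hx).hasDerivWithinAt) fun x hx => by
      rw [interior_Ici] at hx
      have := (hφ2 x hx).1
      rw [le_div_iff₀ (hφpos x hx)] at this
      exact mul_nonneg hx.le (by linarith)
  have hanti := antitoneOn_of_hasDerivWithinAt_nonpos (convex_Ici 0) (hcont (m - 1))
    (fun x hx => (hderiv _ x hx).hasDerivWithinAt) fun x hx => by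
      rw [interior_Ici] at hx
      have := (hφ2 x hx).2
      rw [div_le_iff₀ (hφpos x hx)] at this
      exact mul_nonpos_of_nonneg_of_nonpos hx.le (by linarith)
  have h0 := hmono self_mem_Ici hs hs
  have h1 := hanti self_mem_Ici hs hs
  simp only [kineticEnergy_zero, Phi_zero] at h0 h1
  constructor <;> linarith

theorem kineticEnergy_pos (hφ : ContinuousOn φ (Ici 0)) (hφpos : ∀ t > 0, 0 < φ t) {c : ℝ}
    (hc : 0 < c) (hW : ∀ s, c * Phi φ s ≤ kineticEnergy φ s) {s : ℝ} (hs : s ≠ 0) :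
    0 < kineticEnergy φ s :=
  (mul_pos hc (Phi_pos hφ hφpos hs)).trans_le (hW s)

theorem tendsto_zero_of_tendsto_kineticEnergy (hφ : ContinuousOn φ (Ici 0))
    (hφpos : ∀ t > 0, 0 < φ t) {c : ℝ} (hc : 0 < c) (hW : ∀ s, c * Phi φ s ≤ kineticEnergy φ s)
    {ι : Type*} {f : Filter ι} {v : ι → ℝ} (h : Tendsto (fun i => kineticEnergy φ (v i)) f (𝓝 0)) :
    Tendsto v f (𝓝 0) := by
  refine Metric.tendsto_nhds.2 fun ε hε => ?_
  filter_upwards [h.eventually (eventually_lt_nhds (mul_pos hc (Phi_pos hφ hφpos hε.ne')))]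
    with i hi
  rw [Real.dist_0_eq_abs]
  by_contra! hle
  have := (strictMonoOn_Phi hφ hφpos).monotoneOn (mem_Ici.2 hε.le) (mem_Ici.2 (abs_nonneg _)) hle
  rw [Phi_abs] at this
  nlinarith [hW (v i)]

end kineticEnergy

theorem exists_seq_tendsto_deriv_zero {q : ℝ → ℝ} {a : ℝ} (hq : Differentiable ℝ q)
    (h : Tendsto q atTop (𝓝 a)) :
    ∃ ξ : ℕ → ℝ, Tendsto ξ atTop atTop ∧ Tendsto (fun n => deriv q (ξ n)) atTop (𝓝 0) := by
  have hmvt (n : ℕ) := exists_hasDerivAt_eq_slope q (deriv q) (lt_add_one (n : ℝ))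
    hq.continuous.continuousOn fun x _ => (hq x).hasDerivAt
  choose ξ hξ hξq using hmvt
  refine ⟨ξ, tendsto_atTop_mono (fun n => (hξ n).1.le) tendsto_natCast_atTop_atTop, ?_⟩
  have hdiff := (h.comp (tendsto_atTop_add_const_right _ 1 tendsto_natCast_atTop_atTop)).sub
    (h.comp tendsto_natCast_atTop_atTop)
  rw [sub_self] at hdiff
  refine hdiff.congr fun n => ?_
  simp [hξq]

theorem IsClassicalSolution.hasDerivAt_energy {φ V q : ℝ → ℝ} (hq : IsClassicalSolution φ V q)
    (hq' : Differentiable ℝ (deriv q)) (hφ : ContinuousOn φ (Ici 0)) (hV : Differentiable ℝ V) (t : ℝ) :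
    HasDerivAt (fun s => kineticEnergy φ (deriv q s) - V (q s)) 0 t := by
  have hflux : HasDerivAt (fun s => φ |deriv q s| * deriv q s) (deriv V (q t)) t := by
    refine (hq.2 t).congr_of_eventuallyEq (Eventually.of_forall fun s => ?_)
    dsimp only
    split_ifs with h <;> simp [h]
  have hq'' := (hq' t).hasDerivAt
  have hE := ((hflux.mul hq'').sub ((hasDerivAt_Phi hφ _).comp t hq'')).sub
    ((hV (q t)).hasDerivAt.comp t (hq.1 t).hasDerivAt)
  exact hE.congr_deriv (by ring)

theorem IsHeteroclinic.kineticEnergy_deriv_eq {φ V q : ℝ → ℝ} {α : ℝ}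
    (hq : IsHeteroclinic φ V α q) (hφ : ContinuousOn φ (Ici 0)) (hV : Differentiable ℝ V)
    (hVα : V α = 0) (t : ℝ) : kineticEnergy φ (deriv q t) = V (q t) := by
  obtain ⟨hsol, hq', -, -, htop, -⟩ := hq
  have hconst := is_const_of_deriv_eq_zero
    (fun s => (hsol.hasDerivAt_energy hq' hφ hV s).differentiableAt)
    fun s => (hsol.hasDerivAt_energy hq' hφ hV s).deriv
  obtain ⟨ξ, hξ, hq'ξ⟩ := exists_seq_tendsto_deriv_zero hsol.1 htop
  have hlim := (((continuous_kineticEnergy hφ).tendsto 0).comp hq'ξ).sub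
    ((hV.continuous.tendsto α).comp (htop.comp hξ))
  simp only [Function.comp_def, hconst _ t, kineticEnergy_zero, hVα, sub_zero] at hlim
  exact sub_eq_zero.1 (tendsto_nhds_unique tendsto_const_nhds hlim)

theorem monotoneOn_exp_mul {f f' : ℝ → ℝ} {K : ℝ} {D : Set ℝ} (hD : Convex ℝ D)
    (hf : ∀ x, HasDerivAt f (f' x) x) (hbound : ∀ x ∈ interior D, -(K * f x) ≤ f' x) :
    MonotoneOn (fun t => exp (K * t) * f t) D := by
  have hderiv (x : ℝ) : HasDerivAt (fun t => exp (K * t) * f t)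
      (exp (K * x) * (K * f x + f' x)) x := by
    have := ((hasDerivAt_id x).const_mul K).exp.mul (hf x)
    exact this.congr_deriv (by simp only [id, mul_one]; ring)
  refine monotoneOn_of_hasDerivWithinAt_nonneg hD
    (fun x _ => (hderiv x).continuousAt.continuousWithinAt)
    (fun x _ => (hderiv x).hasDerivWithinAt) fun x hx => ?_
  have := hbound x hx
  exact mul_nonneg (exp_pos _).le (by linarith)

theorem exists_first_hit {f : ℝ → ℝ} (hf : Continuous f) {c t₀ : ℝ} (h0 : f 0 < c)
    (ht₀ : 0 ≤ t₀) (hc : c ≤ f t₀) :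
    ∃ t₁ ∈ Ioc 0 t₀, f t₁ = c ∧ ∀ s ∈ Ico 0 t₁, f s < c := by
  obtain ⟨t₁, ⟨ht₁, hct₁⟩, hleast⟩ := (isCompact_Icc.inter_right
    (isClosed_le continuous_const hf)).exists_isLeast ⟨t₀, ⟨ht₀, le_rfl⟩, hc⟩
  have hbefore : ∀ s ∈ Ico 0 t₁, f s < c := fun s hs =>
    not_le.1 fun hcs => hs.2.not_ge (hleast ⟨⟨hs.1, hs.2.le.trans ht₁.2⟩, hcs⟩)
  obtain ⟨s, hs, hfs⟩ := intermediate_value_Icc ht₁.1 hf.continuousOn ⟨h0.le, hct₁⟩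
  have hst : s = t₁ := le_antisymm hs.2 (hleast ⟨⟨hs.1, hs.2.trans ht₁.2⟩, hfs.ge⟩)
  refine ⟨t₁, ⟨lt_of_le_of_ne ht₁.1 ?_, ht₁.2⟩, hst ▸ hfs, hbefore⟩
  rintro rfl
  exact h0.not_ge hct₁

theorem lt_of_abs_deriv_le_mul_sub_of_nonneg {q : ℝ → ℝ} {α ε C : ℝ} (hq : Differentiable ℝ q)
    (hq' : Continuous (deriv q)) (hq0 : q 0 < α) (hε : 0 < ε)
    (hstat : ∀ t, q t = α → deriv q t = 0)
    (hcmp : ∀ t, α - ε < q t → q t ≤ α → |deriv q t| ≤ ε → |deriv q t| ≤ C * (α - q t))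
    {t : ℝ} (ht : 0 ≤ t) : q t < α := by
  -- Up to the first time `t₁` at which `q` reaches `α`, `α - q` decays at most exponentially,
  -- so it cannot vanish at `t₁`.
  by_contra! hαt
  obtain ⟨t₁, ht₁, hqt₁, hbefore⟩ := exists_first_hit hq.continuous hq0 ht hαt
  have hnear : ∀ᶠ s in 𝓝 t₁, α - ε < q s ∧ |deriv q s| < ε := by
    refine ((hq.continuous.tendsto t₁).eventually (lt_mem_nhds ?_)).and
      (((continuous_abs.comp hq').tendsto t₁).eventually (gt_mem_nhds ?_))
    · linarith
    · simpa [hstat t₁ hqt₁] using hε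
  obtain ⟨η, hη, hball⟩ := Metric.eventually_nhds_iff.1 hnear
  set a := max 0 (t₁ - η / 2)
  have ha : a < t₁ := max_lt ht₁.1 (by linarith)
  have hqa : q a < α := hbefore a ⟨le_max_left _ _, ha⟩
  have hmono := monotoneOn_exp_mul (K := C) (f := fun s => α - q s) (convex_Icc a t₁)
    (fun x => ((hq x).hasDerivAt).const_sub α) fun x hx => by
      rw [interior_Icc] at hx
      have hx₀ : 0 ≤ x := (le_max_left _ _).trans hx.1.le
      obtain ⟨h₁, h₂⟩ := hball (show dist x t₁ < η by
        rw [Real.dist_eq, abs_of_neg (by linarith [hx.2])]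
        linarith [le_max_right 0 (t₁ - η / 2), hx.1])
      have := hcmp x h₁ (hbefore x ⟨hx₀, hx.2⟩).le h₂.le
      linarith [le_abs_self (deriv q x)]
  have : exp (C * a) * (α - q a) ≤ exp (C * t₁) * (α - q t₁) :=
    hmono ⟨le_rfl, ha.le⟩ ⟨ha.le, le_rfl⟩ ha.le
  rw [hqt₁, sub_self, mul_zero] at this
  exact (mul_pos (exp_pos _) (sub_pos.2 hqa)).not_ge this

theorem lt_of_abs_deriv_le_mul_sub {q : ℝ → ℝ} {α ε C : ℝ} (hq : Differentiable ℝ q)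
    (hq' : Continuous (deriv q)) (hq0 : q 0 < α) (hε : 0 < ε)
    (hstat : ∀ t, q t = α → deriv q t = 0)
    (hcmp : ∀ t, α - ε < q t → q t ≤ α → |deriv q t| ≤ ε → |deriv q t| ≤ C * (α - q t))
    (t : ℝ) : q t < α := by
  rcases le_total 0 t with ht | ht
  · exact lt_of_abs_deriv_le_mul_sub_of_nonneg hq hq' hq0 hε hstat hcmp ht
  have hderiv : deriv (fun s => q (-s)) = fun s => -deriv q (-s) := funext (deriv_comp_neg q)
  have := lt_of_abs_deriv_le_mul_sub_of_nonneg (q := fun s => q (-s)) (hq.comp differentiable_neg)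
    (hderiv ▸ (hq'.comp continuous_neg).neg) (by simpa using hq0) hε
    (fun s hs => by simp [hderiv, hstat _ hs])
    (fun s => by simpa only [hderiv, abs_neg] using hcmp (-s)) (neg_nonneg.2 ht)
  simpa using this

theorem deriv_pos_of_ne_zero {q : ℝ → ℝ} {α : ℝ} (hq : Differentiable ℝ q)
    (hq' : Continuous (deriv q)) (hne : ∀ t, deriv q t ≠ 0) (hq0 : q 0 < α)
    (htop : Tendsto q atTop (𝓝 α)) (t : ℝ) : 0 < deriv q t := by
  by_contra! ht
  have hneg : ∀ s, deriv q s < 0 := fun s => by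
    by_contra! hs
    obtain ⟨z, -, hz⟩ := intermediate_value_uIcc hq'.continuousOn
      (mem_uIcc.2 (Or.inl ⟨ht, hs⟩) : (0 : ℝ) ∈ uIcc (deriv q t) (deriv q s))
    exact hne z hz
  have hanti := antitone_of_deriv_nonpos hq fun s => (hneg s).le
  have := le_of_tendsto htop (eventually_atTop.2 ⟨0, fun s hs => hanti hs⟩)
  linarith

theorem exists_le_mul_exp_of_forall_ge {g : ℝ → ℝ} (hg : Continuous g) {c K T : ℝ}
    (h : ∀ t, T ≤ t → g t ≤ K * exp (-c * t)) :
    ∃ β > 0, ∀ t, 0 ≤ t → g t ≤ β * exp (-c * t) := by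
  obtain ⟨M, hM⟩ := isCompact_Icc.bddAbove_image (f := fun t => g t * exp (c * t)) (K := Icc 0 T)
    (hg.mul (continuous_const.mul continuous_id).rexp).continuousOn
  refine ⟨max (max K M) 1, by positivity, fun t ht => ?_⟩
  rcases le_total T t with hTt | htT
  · exact (h t hTt).trans (mul_le_mul_of_nonneg_right (by simp) (exp_pos _).le)
  have hgt : g t = g t * exp (c * t) * exp (-c * t) := by
    rw [mul_assoc, ← exp_add, neg_mul, add_neg_cancel, exp_zero, mul_one]
  rw [hgt]
  exact mul_le_mul_of_nonneg_right ((hM ⟨t, ⟨ht, htT⟩, rfl⟩).trans (by simp)) (exp_pos _).le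

theorem exists_deriv_le_mul_exp {q : ℝ → ℝ} {α ε C C' : ℝ} (hq : Differentiable ℝ q)
    (hq' : Continuous (deriv q)) (hpos : ∀ t, 0 < deriv q t) (hlt : ∀ t, q t < α)
    (htop : Tendsto q atTop (𝓝 α)) (hq'top : Tendsto (deriv q) atTop (𝓝 0)) (hε : 0 < ε)
    (hC : 0 < C) (hC' : 0 < C')
    (hcmp : ∀ t, α - ε < q t → q t ≤ α → |deriv q t| ≤ ε →
      |deriv q t| ≤ C * (α - q t) ∧ α - q t ≤ C' * |deriv q t|) :
    ∃ β₁ β₂ : ℝ, 0 < β₁ ∧ 0 < β₂ ∧ ∀ t, 0 ≤ t → deriv q t ≤ β₁ * exp (-β₂ * t) := by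
  obtain ⟨T, hT⟩ := eventually_atTop.1 ((htop.eventually (lt_mem_nhds (sub_lt_self α hε))).and
    (hq'top.eventually (eventually_abs_sub_lt 0 hε)))
  have hcmpT (t : ℝ) (ht : T ≤ t) : deriv q t ≤ C * (α - q t) ∧ α - q t ≤ C' * deriv q t := by
    have := hcmp t (hT t ht).1 (hlt t).le (by simpa using (hT t ht).2.le)
    rwa [abs_of_pos (hpos t)] at this
  have hmono := monotoneOn_exp_mul (K := C'⁻¹) (f := fun s => q s - α) (convex_Ici T)
    (fun x => ((hq x).hasDerivAt).sub_const α) fun x hx => by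
      rw [interior_Ici] at hx
      have := (hcmpT x hx.le).2
      rw [← div_le_iff₀' hC', div_eq_inv_mul] at this
      linarith
  have hdecay (t : ℝ) (ht : T ≤ t) :
      deriv q t ≤ C * (α - q T) * exp (C'⁻¹ * T) * exp (-C'⁻¹ * t) := by
    have h : exp (C'⁻¹ * T) * (q T - α) ≤ exp (C'⁻¹ * t) * (q t - α) := hmono self_mem_Ici ht ht
    have hexp : exp (C'⁻¹ * t) * exp (-C'⁻¹ * t) = 1 := by
      rw [← exp_add, neg_mul, add_neg_cancel, exp_zero]
    calc deriv q t ≤ C * (α - q t) := (hcmpT t ht).1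
      _ ≤ C * (α - q T) * exp (C'⁻¹ * T) * exp (-C'⁻¹ * t) := by
        rw [mul_assoc, mul_assoc]
        refine mul_le_mul_of_nonneg_left ?_ hC.le
        linear_combination mul_le_mul_of_nonneg_left h (exp_pos (-C'⁻¹ * t)).le + (q t - α) * hexp
  obtain ⟨β, hβ, hβbound⟩ := exists_le_mul_exp_of_forall_ge hq' hdecay
  exact ⟨β, C'⁻¹, hβ, inv_pos.2 hC', hβbound⟩

structure IsAdmissible (φ : ℝ → ℝ) (l m : ℝ) : Prop where
  contDiffOn : ContDiffOn ℝ 1 φ (Ioi 0)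
  continuousOn : ContinuousOn φ (Ici 0)
  pos : ∀ t > 0, 0 < φ t
  one_lt : 1 < l
  le : l ≤ m
  deriv_bounds : ∀ t > 0, l - 1 ≤ deriv (fun s => φ s * s) t / φ t ∧
    deriv (fun s => φ s * s) t / φ t ≤ m - 1
  rpow_bounds : ∃ c₁ c₂ δ₀ r : ℝ, 0 < c₁ ∧ 0 < c₂ ∧ 0 < δ₀ ∧ 1 < r ∧
    ∀ t : ℝ, 0 < t → t ≤ δ₀ → c₁ * t ^ (r - 1) ≤ φ t * t ∧ φ t * t ≤ c₂ * t ^ (r - 1)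

namespace IsAdmissible

variable {φ : ℝ → ℝ} {l m : ℝ}

theorem kineticEnergy_bounds (hφ : IsAdmissible φ l m) (s : ℝ) :
    (l - 1) * Phi φ s ≤ kineticEnergy φ s ∧ kineticEnergy φ s ≤ (m - 1) * Phi φ s :=
  _root_.kineticEnergy_bounds hφ.contDiffOn hφ.continuousOn hφ.deriv_bounds hφ.pos s

theorem kineticEnergy_pos (hφ : IsAdmissible φ l m) {p : ℝ} (hp : p ≠ 0) : 0 < kineticEnergy φ p :=
  _root_.kineticEnergy_pos hφ.continuousOn hφ.pos (by linarith [hφ.one_lt])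
    (fun s => (hφ.kineticEnergy_bounds s).1) hp

theorem tendsto_zero_of_tendsto_kineticEnergy (hφ : IsAdmissible φ l m) {ι : Type*} {f : Filter ι}
    {v : ι → ℝ} (h : Tendsto (fun i => kineticEnergy φ (v i)) f (𝓝 0)) : Tendsto v f (𝓝 0) :=
  _root_.tendsto_zero_of_tendsto_kineticEnergy hφ.continuousOn hφ.pos (by linarith [hφ.one_lt])
    (fun s => (hφ.kineticEnergy_bounds s).1) h

-- `W ≍ Φ` by (φ2) and `Φ(s) ≍ s ^ r` near `0` by (φ3), so `W(p) = U(x) ≍ Φ(α - x)` forces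
-- `|p| ≍ α - x`.
theorem exists_comparison_near (hφ : IsAdmissible φ l m) {U : ℝ → ℝ} {α a₁ a₂ δ : ℝ}
    (ha₁ : 0 < a₁) (ha₂ : 0 < a₂) (hδ : 0 < δ)
    (hU : ∀ x, α - δ < x → x ≤ α → a₁ * Phi φ |x - α| ≤ U x ∧ U x ≤ a₂ * Phi φ |x - α|) :
    ∃ ε > 0, ∃ C > 0, ∃ C' > 0, ∀ p x, α - ε < x → x ≤ α → |p| ≤ ε →
      kineticEnergy φ p = U x → |p| ≤ C * (α - x) ∧ α - x ≤ C' * |p| := by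
  obtain ⟨c₁, c₂, δ₀, r, hc₁, hc₂, hδ₀, hr, hφr⟩ := hφ.rpow_bounds
  have hΦ (s : ℝ) := Phi_rpow_bounds (s := s) hφ.continuousOn hr hφr
  have hr : 0 < r := by linarith
  have hl1 : 0 < l - 1 := by linarith [hφ.one_lt]
  have hm1 : 0 < m - 1 := by linarith [hφ.one_lt, hφ.le]
  refine ⟨min δ δ₀, lt_min hδ hδ₀,
    _, rpow_pos_of_pos (by positivity : 0 < a₂ * c₂ / ((l - 1) * c₁)) r⁻¹,
    _, rpow_pos_of_pos (by positivity : 0 < (m - 1) * c₂ / (a₁ * c₁)) r⁻¹,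
    fun p x hx hxα hp hWU => ?_⟩
  have hx₀ : 0 ≤ α - x := by linarith
  have hxδ₀ : α - x ≤ δ₀ := by linarith [min_le_right δ δ₀]
  have hpδ₀ : |p| ≤ δ₀ := hp.trans (min_le_right _ _)
  have hUx := hU x (by linarith [min_le_left δ δ₀]) hxα
  rw [abs_sub_comm, abs_of_nonneg hx₀] at hUx
  have hWp := hφ.kineticEnergy_bounds p
  rw [← Phi_abs p] at hWp
  exact ⟨le_rpow_inv_mul_of_mul_Phi_le hc₁ hc₂.le hr hΦ hl1 ha₂.le (abs_nonneg p) hpδ₀ hx₀ hxδ₀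
      (hWp.1.trans (hWU.trans_le hUx.2)),
    le_rpow_inv_mul_of_mul_Phi_le hc₁ hc₂.le hr hΦ ha₁ hm1.le hx₀ hxδ₀ (abs_nonneg p) hpδ₀
      (hUx.1.trans (hWU.symm.trans_le hWp.2))⟩

theorem lt_of_kineticEnergy_eq (hφ : IsAdmissible φ l m) {U q : ℝ → ℝ} {α a₁ a₂ δ : ℝ}
    (ha₁ : 0 < a₁) (ha₂ : 0 < a₂) (hδ : 0 < δ)
    (hU : ∀ x, α - δ < x → x ≤ α → a₁ * Phi φ |x - α| ≤ U x ∧ U x ≤ a₂ * Phi φ |x - α|)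
    (hUα : U α = 0) (hq : Differentiable ℝ q) (hq' : Continuous (deriv q)) (hq0 : q 0 < α)
    (hE : ∀ t, kineticEnergy φ (deriv q t) = U (q t)) (t : ℝ) : q t < α := by
  obtain ⟨ε, hε, C, -, C', -, hcmp⟩ := hφ.exists_comparison_near ha₁ ha₂ hδ hU
  refine lt_of_abs_deriv_le_mul_sub hq hq' hq0 hε (fun t ht => ?_)
    (fun t h₁ h₂ h₃ => (hcmp _ _ h₁ h₂ h₃ (hE t)).1) t
  by_contra h
  exact (hφ.kineticEnergy_pos h).ne' (by rw [hE, ht, hUα])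

theorem exists_deriv_le_mul_exp (hφ : IsAdmissible φ l m) {U q : ℝ → ℝ} {α a₁ a₂ δ : ℝ}
    (ha₁ : 0 < a₁) (ha₂ : 0 < a₂) (hδ : 0 < δ)
    (hU : ∀ x, α - δ < x → x ≤ α → a₁ * Phi φ |x - α| ≤ U x ∧ U x ≤ a₂ * Phi φ |x - α|)
    (hUα : U α = 0) (hUc : ContinuousAt U α) (hq : Differentiable ℝ q)
    (hq' : Continuous (deriv q)) (hpos : ∀ t, 0 < deriv q t) (hlt : ∀ t, q t < α)
    (htop : Tendsto q atTop (𝓝 α)) (hE : ∀ t, kineticEnergy φ (deriv q t) = U (q t)) :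
    ∃ β₁ β₂ : ℝ, 0 < β₁ ∧ 0 < β₂ ∧ ∀ t, 0 ≤ t → deriv q t ≤ β₁ * exp (-β₂ * t) := by
  obtain ⟨ε, hε, C, hC, C', hC', hcmp⟩ := hφ.exists_comparison_near ha₁ ha₂ hδ hU
  have hq'top : Tendsto (deriv q) atTop (𝓝 0) := hφ.tendsto_zero_of_tendsto_kineticEnergy <| by
    simpa [hE, hUα, Function.comp_def] using hUc.tendsto.comp htop
  exact _root_.exists_deriv_le_mul_exp hq hq' hpos hlt htop hq'top hε hC hC'
    fun t h₁ h₂ h₃ => hcmp _ _ h₁ h₂ h₃ (hE t)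

end IsAdmissible

theorem deriv_neg_comp_neg (q : ℝ → ℝ) (t : ℝ) : deriv (fun t => -q (-t)) t = deriv q (-t) := by
  rw [show (fun t => -q (-t)) = -fun t => q (-t) from rfl, deriv.neg, deriv_comp_neg, neg_neg]

theorem statement3_general (φ V : ℝ → ℝ) (l m α : ℝ) (q : ℝ → ℝ)
    (hφC1 : ContDiffOn ℝ 1 φ (Set.Ioi 0))
    (hφpos : ∀ t > 0, 0 < φ t)
    (hl : 1 < l) (hlm : l ≤ m)
    (hφ2 : ∀ t > 0, l - 1 ≤ deriv (fun s => φ s * s) t / φ t ∧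
      deriv (fun s => φ s * s) t / φ t ≤ m - 1)
    (hφ3 : ∃ c₁ c₂ δ₀ r : ℝ, 0 < c₁ ∧ 0 < c₂ ∧ 0 < δ₀ ∧ 1 < r ∧
      ∀ t : ℝ, 0 < t → t ≤ δ₀ → c₁ * t ^ (r - 1) ≤ φ t * t ∧ φ t * t ≤ c₂ * t ^ (r - 1))
    (hφ4 : ContinuousOn φ (Set.Ici 0) ∧ MonotoneOn φ (Set.Ici 0))
    (hα : 0 < α)
    (hV1 : ContDiff ℝ 1 V)
    (hV2 : V α = 0 ∧ V (-α) = 0 ∧ ∀ t, -α < t → t < α → 0 < V t)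
    (hV3 : ∃ a₁ a₂ a₃ a₄ δ : ℝ, 0 < a₁ ∧ 0 < a₂ ∧ 0 < a₃ ∧ 0 < a₄ ∧ 0 < δ ∧ δ < α ∧
      (∀ t, α - δ < t → t ≤ α → a₁ * Phi φ |t - α| ≤ V t ∧ V t ≤ a₂ * Phi φ |t - α|) ∧
      (∀ t, -α ≤ t → t < -α + δ → a₃ * Phi φ |t + α| ≤ V t ∧ V t ≤ a₄ * Phi φ |t + α|))
    (hq : IsHeteroclinic φ V α q) :
    ∃ β₁ β₂ β₃ β₄ : ℝ, 0 < β₁ ∧ 0 < β₂ ∧ 0 < β₃ ∧ 0 < β₄ ∧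
      (∀ t : ℝ, 0 ≤ t → 0 < deriv q t ∧ deriv q t ≤ β₁ * Real.exp (-β₂ * t)) ∧
      (∀ t : ℝ, t ≤ 0 → 0 < deriv q t ∧ deriv q t ≤ β₃ * Real.exp (β₄ * t)) := by
  have hφ : IsAdmissible φ l m := ⟨hφC1, hφ4.1, hφpos, hl, hlm, hφ2, hφ3⟩
  obtain ⟨a₁, a₂, a₃, a₄, δ, ha₁, ha₂, ha₃, ha₄, hδ, -, hVα, hV_α⟩ := hV3
  have hE := hq.kineticEnergy_deriv_eq hφ4.1 (hV1.differentiable one_ne_zero) hV2.1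
  obtain ⟨⟨hqd, -⟩, -, hq', hq0, htop, hbot⟩ := hq
  -- `p` is a solution of the same kind for the reflected potential `V (-·)`
  set p : ℝ → ℝ := fun t => -q (-t) with hp
  have hrd (t : ℝ) : deriv p t = deriv q (-t) := deriv_neg_comp_neg q t
  have hrE (t : ℝ) : kineticEnergy φ (deriv p t) = V (-p t) := by
    rw [hrd, hE, hp, neg_neg]
  have hrU (x : ℝ) (h₁ : α - δ < x) (h₂ : x ≤ α) :
      a₃ * Phi φ |x - α| ≤ V (-x) ∧ V (-x) ≤ a₄ * Phi φ |x - α| := by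
    simpa [abs_sub_comm x α, neg_add_eq_sub] using hV_α (-x) (by linarith) (by linarith)
  have hrq : Differentiable ℝ p := (hqd.comp differentiable_neg).neg
  have hrq' : Continuous (deriv p) := by
    rw [funext hrd]
    exact hq'.comp continuous_neg
  have hlt := hφ.lt_of_kineticEnergy_eq ha₁ ha₂ hδ hVα hV2.1 hqd hq' (by rwa [hq0]) hE
  have hrlt := hφ.lt_of_kineticEnergy_eq ha₃ ha₄ hδ hrU (by simpa using hV2.2.1) hrq hrq'
    (by simpa [hp, hq0] using hα) hrE
  have hgt (t : ℝ) : -α < q t := by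
    have := hrlt (-t)
    simp only [hp, neg_neg] at this
    linarith
  have hpos := deriv_pos_of_ne_zero hqd hq' (fun t h0 => (hV2.2.2 (q t) (hgt t) (hlt t)).ne'
    (by rw [← hE, h0, kineticEnergy_zero])) (by rwa [hq0]) htop
  obtain ⟨β₁, β₂, hβ₁, hβ₂, h₁⟩ := hφ.exists_deriv_le_mul_exp ha₁ ha₂ hδ hVα hV2.1
    hV1.continuous.continuousAt hqd hq' hpos hlt htop hE
  obtain ⟨β₃, β₄, hβ₃, hβ₄, h₂⟩ := hφ.exists_deriv_le_mul_exp ha₃ ha₄ hδ hrU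
    (by simpa using hV2.2.1) (hV1.continuous.comp continuous_neg).continuousAt hrq hrq'
    (fun t => hrd t ▸ hpos (-t)) hrlt
    (by simpa using (hbot.comp tendsto_neg_atTop_atBot).neg) hrE
  refine ⟨β₁, β₂, β₃, β₄, hβ₁, hβ₂, hβ₃, hβ₄, fun t ht => ⟨hpos t, h₁ t ht⟩,
    fun t ht => ⟨hpos t, ?_⟩⟩
  simpa [hrd] using h₂ (-t) (by linarith)

theorem statement3 (φ V : ℝ → ℝ) (l m α : ℝ) (q : ℝ → ℝ)
    (hφC1 : ContDiffOn ℝ 1 φ (Set.Ioi 0))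
    (hφpos : ∀ t > 0, 0 < φ t)
    (hφ1 : ∀ t > 0, 0 < deriv (fun s => φ s * s) t)
    (hl : 1 < l) (hlm : l ≤ m)
    (hφ2 : ∀ t > 0, l - 1 ≤ deriv (fun s => φ s * s) t / φ t ∧
      deriv (fun s => φ s * s) t / φ t ≤ m - 1)
    (hφ3 : ∃ c₁ c₂ δ₀ r : ℝ, 0 < c₁ ∧ 0 < c₂ ∧ 0 < δ₀ ∧ 1 < r ∧
      ∀ t : ℝ, 0 < t → t ≤ δ₀ → c₁ * t ^ (r - 1) ≤ φ t * t ∧ φ t * t ≤ c₂ * t ^ (r - 1))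
    (hφ4 : ContinuousOn φ (Set.Ici 0) ∧ MonotoneOn φ (Set.Ici 0))
    (hα : 0 < α)
    (hV1 : ContDiff ℝ 1 V) (hVnn : ∀ t, 0 ≤ V t)
    (hV2 : V α = 0 ∧ V (-α) = 0 ∧ ∀ t, -α < t → t < α → 0 < V t)
    (hV3 : ∃ a₁ a₂ a₃ a₄ δ : ℝ, 0 < a₁ ∧ 0 < a₂ ∧ 0 < a₃ ∧ 0 < a₄ ∧ 0 < δ ∧ δ < α ∧
      (∀ t, α - δ < t → t ≤ α → a₁ * Phi φ |t - α| ≤ V t ∧ V t ≤ a₂ * Phi φ |t - α|) ∧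
      (∀ t, -α ≤ t → t < -α + δ → a₃ * Phi φ |t + α| ≤ V t ∧ V t ≤ a₄ * Phi φ |t + α|))
    (hV4 : ∃ k₁ k₂ k₃ k₄ k₅ k₆ k₇ k₈ : ℝ, 0 < k₁ ∧ 0 < k₂ ∧ 0 < k₃ ∧ 0 < k₄ ∧
      0 < k₅ ∧ 0 < k₆ ∧ 0 < k₇ ∧ 0 < k₈ ∧
      (∀ t, 0 ≤ t → t ≤ α →
        -(k₃ * t * φ (k₄ * |t - α|) * |t - α|) ≤ deriv V t ∧
        deriv V t ≤ -(k₁ * t * φ (k₂ * |t - α|) * |t - α|)) ∧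
      (∀ t, -α ≤ t → t ≤ 0 →
        -(k₇ * t * φ (k₈ * |t + α|) * |t + α|) ≤ deriv V t ∧
        deriv V t ≤ -(k₅ * t * φ (k₆ * |t + α|) * |t + α|)))
    (hV5 : ∃ ρ > 0, StrictConvexOn ℝ (Set.Ioo (-α - ρ) (-α + ρ)) V ∧
      StrictConvexOn ℝ (Set.Ioo (α - ρ) (α + ρ)) V)
    (hq : IsHeteroclinic φ V α q) :
    ∃ β₁ β₂ β₃ β₄ : ℝ, 0 < β₁ ∧ 0 < β₂ ∧ 0 < β₃ ∧ 0 < β₄ ∧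
      (∀ t : ℝ, 0 ≤ t → 0 < deriv q t ∧ deriv q t ≤ β₁ * Real.exp (-β₂ * t)) ∧
      (∀ t : ℝ, t ≤ 0 → 0 < deriv q t ∧ deriv q t ≤ β₃ * Real.exp (β₄ * t)) :=
  statement3_general φ V l m α q hφC1 hφpos hl hlm hφ2 hφ3 hφ4 hα hV1 hV2 hV3 hq
end
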